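/- arXiv:2603.29054 — 4 statements merged into one kernel-verified Lean document; each statement's English description precedes it below -/
import Mathlib

section
/- Let θ* ∈ E, r > 0, and let B be the closed ball of radius r centered at θ*. Let F : E → E be continuously differentiable on B, and suppose there exists μ > 0 such that ⟪v, F'(θ) v⟫ ≤ −μ‖v‖² for every θ ∈ B and every v ∈ E. If ‖F(θ*)‖ < μ r / 2, then F has exactly one zero θ̂ in B, and this zero satisfies ‖θ̂ − θ*‖ ≤ ‖F(θ*)‖ / μ. -/
open scoped RealInnerProductSpace NNReal
open Set Metric

/-!
Comparing `F` at the two ends of a segment through the derivative shows that `F` is `μ`-strongly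
dissipative on the ball: `⟪a - b, F a - F b⟫ ≤ -μ ‖a - b‖²`. This alone gives uniqueness of the
zero and, with Cauchy–Schwarz, the bound `μ ‖θ̂ - θ*‖ ≤ ‖F θ*‖`. For existence, the continuous
derivative makes `F` Lipschitz on the compact ball, and for a small step `c > 0` the map
`x ↦ x + c • F x` is then a contraction of the ball into itself; its fixed point is the zero.
-/

theorem IsCompact.exists_lipschitzOnWith_of_hasFDerivWithinAt {E G : Type*}
    [NormedAddCommGroup E] [NormedSpace ℝ E] [NormedAddCommGroup G] [NormedSpace ℝ G]
    {s : Set E} (hs : IsCompact s) (hs' : Convex ℝ s) {f : E → G} {f' : E → E →L[ℝ] G}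
    (hf : ∀ x ∈ s, HasFDerivWithinAt f (f' x) s x) (hf' : ContinuousOn f' s) :
    ∃ L, LipschitzOnWith L f s := by
  obtain ⟨C, hC⟩ := hs.exists_bound_of_continuousOn hf'
  refine ⟨C.toNNReal, hs'.lipschitzOnWith_of_nnnorm_hasFDerivWithin_le hf fun x hx => ?_⟩
  rw [← NNReal.coe_le_coe, coe_nnnorm]
  exact (hC x hx).trans (Real.le_coe_toNNReal C)

variable {E : Type*} [NormedAddCommGroup E] [InnerProductSpace ℝ E]

-- equivalently, `-F` is `μ`-strongly monotone on `s`
def StronglyDissipativeOn (μ : ℝ) (F : E → E) (s : Set E) : Prop :=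
  ∀ ⦃a⦄, a ∈ s → ∀ ⦃b⦄, b ∈ s → ⟪a - b, F a - F b⟫ ≤ -μ * ‖a - b‖ ^ 2

theorem Convex.stronglyDissipativeOn_of_hasFDerivWithinAt {s : Set E} (hs : Convex ℝ s)
    {F : E → E} {F' : E → E →L[ℝ] E} (hF : ∀ x ∈ s, HasFDerivWithinAt F (F' x) s x) {μ : ℝ}
    (hF' : ∀ x ∈ s, ∀ v, ⟪v, F' x v⟫ ≤ -μ * ‖v‖ ^ 2) : StronglyDissipativeOn μ F s := by
  intro a ha b hb
  set γ := AffineMap.lineMap (k := ℝ) b a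
  have hγ : MapsTo γ (Icc 0 1) s := fun t ht => hs.lineMap_mem hb ha ht
  have hderiv : ∀ t ∈ Icc (0 : ℝ) 1,
      HasDerivWithinAt (fun t => ⟪a - b, F (γ t)⟫ + t * (μ * ‖a - b‖ ^ 2))
        (⟪a - b, F' (γ t) (a - b)⟫ + μ * ‖a - b‖ ^ 2) (Icc 0 1) t := by
    intro t ht
    have hFγ := (hF _ (hγ ht)).comp_hasDerivWithinAt t AffineMap.hasDerivWithinAt_lineMap hγ
    exact ((innerSL ℝ (a - b)).hasFDerivAt.comp_hasDerivWithinAt t hFγ).add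
      ((hasDerivAt_mul_const _).hasDerivWithinAt)
  have hanti := antitoneOn_of_hasDerivWithinAt_nonpos (convex_Icc 0 1)
    (fun t ht => (hderiv t ht).continuousWithinAt)
    (fun t ht => (hderiv t (interior_subset ht)).mono interior_subset)
    (fun t ht => by linarith [hF' _ (hγ (interior_subset ht)) (a - b)])
  have h01 := hanti (left_mem_Icc.2 zero_le_one) (right_mem_Icc.2 zero_le_one) zero_le_one
  simp only [γ, AffineMap.lineMap_apply_zero, AffineMap.lineMap_apply_one] at h01
  rw [inner_sub_right]
  linarith

namespace StronglyDissipativeOn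

variable {μ : ℝ} {F : E → E} {s : Set E}

theorem mul_norm_sub_le (hF : StronglyDissipativeOn μ F s) {a b : E} (ha : a ∈ s) (hb : b ∈ s) :
    μ * ‖a - b‖ ≤ ‖F a - F b‖ := by
  have hcs := real_inner_le_norm (a - b) (F b - F a)
  rw [← neg_sub (F a), inner_neg_right, norm_neg] at hcs
  rcases (norm_nonneg (a - b)).eq_or_lt with h0 | hpos
  · rw [← h0, mul_zero]
    exact norm_nonneg _
  · nlinarith [hF ha hb]

theorem injOn (hF : StronglyDissipativeOn μ F s) (hμ : 0 < μ) : InjOn F s :=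
    fun a ha b hb hab => by
  have := hF.mul_norm_sub_le ha hb
  rw [hab, sub_self, norm_zero] at this
  exact sub_eq_zero.1 (norm_le_zero_iff.1 (nonpos_of_mul_nonpos_right this hμ))

theorem dist_add_smul_le (hF : StronglyDissipativeOn μ F s) {L : ℝ≥0}
    (hL : LipschitzOnWith L F s) {c : ℝ} (hc : 0 ≤ c) (hcL : c * L ^ 2 ≤ μ) (hcμ : c * μ ≤ 2)
    {a b : E} (ha : a ∈ s) (hb : b ∈ s) :
    dist (a + c • F a) (b + c • F b) ≤ (1 - c * μ / 2) * dist a b := by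
  have hLip : ‖F a - F b‖ ≤ L * ‖a - b‖ := by
    simpa only [dist_eq_norm] using hL.dist_le_mul a ha b hb
  have hsq : ‖(a - b) + c • (F a - F b)‖ ^ 2 ≤ ((1 - c * μ / 2) * ‖a - b‖) ^ 2 := by
    have hmono : c * ⟪a - b, F a - F b⟫ ≤ c * (-μ * ‖a - b‖ ^ 2) :=
      mul_le_mul_of_nonneg_left (hF ha hb) hc
    have hF2 : c ^ 2 * ‖F a - F b‖ ^ 2 ≤ c * μ * ‖a - b‖ ^ 2 := by
      calc c ^ 2 * ‖F a - F b‖ ^ 2 ≤ c ^ 2 * (L * ‖a - b‖) ^ 2 := by gcongr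
        _ = c * (c * L ^ 2) * ‖a - b‖ ^ 2 := by ring
        _ ≤ c * μ * ‖a - b‖ ^ 2 := by gcongr
    rw [norm_add_sq_real, real_inner_smul_right, norm_smul, Real.norm_of_nonneg hc]
    nlinarith [sq_nonneg (c * μ * ‖a - b‖)]
  have hk : 0 ≤ (1 - c * μ / 2) * ‖a - b‖ := mul_nonneg (by linarith) (norm_nonneg _)
  rw [dist_eq_norm, dist_eq_norm, add_sub_add_comm, ← smul_sub]
  exact (pow_le_pow_iff_left₀ (norm_nonneg _) hk two_ne_zero).1 hsq

theorem exists_zero_mem_closedBall [CompleteSpace E] {x₀ : E} {r : ℝ}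
    (hF : StronglyDissipativeOn μ F (closedBall x₀ r)) (hμ : 0 < μ) {L : ℝ≥0}
    (hL : LipschitzOnWith L F (closedBall x₀ r)) (hr : 0 ≤ r) (hx₀ : ‖F x₀‖ ≤ μ * r / 2) :
    ∃ x ∈ closedBall x₀ r, F x = 0 := by
  obtain ⟨K, hK, hμK⟩ : ∃ K : ℝ≥0, LipschitzOnWith K F (closedBall x₀ r) ∧ μ ≤ K :=
    ⟨max L ⟨μ, hμ.le⟩, hL.weaken (le_max_left _ _), le_max_right L ⟨μ, hμ.le⟩⟩
  -- the step size `c = μ / K²` makes `x ↦ x + c • F x` a contraction with constant `1 - c μ / 2`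
  set c := μ / (K : ℝ) ^ 2
  have hK0 : 0 < (K : ℝ) := hμ.trans_le hμK
  have hc : 0 < c := by positivity
  have hcK : c * K ^ 2 = μ := div_mul_cancel₀ μ (by positivity)
  have hcμ : c * μ ≤ 1 := by
    rw [div_mul_eq_mul_div, div_le_one (by positivity), ← sq]
    exact pow_le_pow_left₀ hμ.le hμK 2
  set T : E → E := fun x => x + c • F x
  have hT : ∀ a ∈ closedBall x₀ r, ∀ b ∈ closedBall x₀ r,
      dist (T a) (T b) ≤ (1 - c * μ / 2) * dist a b :=
    fun a ha b hb => hF.dist_add_smul_le hK hc.le hcK.le (by linarith) ha hb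
  have hx₀r : x₀ ∈ closedBall x₀ r := mem_closedBall_self hr
  have hmaps : MapsTo T (closedBall x₀ r) (closedBall x₀ r) := fun x hx => by
    have hstep : dist (T x₀) x₀ ≤ c * (μ * r / 2) := by
      rw [dist_self_add_left, norm_smul, Real.norm_of_nonneg hc.le]
      exact mul_le_mul_of_nonneg_left hx₀ hc.le
    have hx' : dist x x₀ ≤ r := hx
    calc dist (T x) x₀ ≤ dist (T x) (T x₀) + dist (T x₀) x₀ := dist_triangle _ _ _
      _ ≤ (1 - c * μ / 2) * r + c * (μ * r / 2) := by
          gcongr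
          exact (hT x hx x₀ hx₀r).trans (by gcongr; linarith)
      _ = r := by ring
  have hcontr : ContractingWith (1 - c * μ / 2).toNNReal (hmaps.restrict T _ _) := by
    refine ⟨Real.toNNReal_lt_one.2 (by linarith [mul_pos hc hμ]), .of_dist_le_mul fun a b => ?_⟩
    rw [Real.coe_toNNReal _ (by linarith)]
    exact hT a a.2 b b.2
  obtain ⟨x, hx, hfix, -⟩ := hcontr.exists_fixedPoint' isClosed_closedBall.isComplete hmaps hx₀r
    (edist_ne_top _ _)
  exact ⟨x, hx, (smul_eq_zero.1 (add_eq_left.1 hfix)).resolve_left hc.ne'⟩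

end StronglyDissipativeOn

/-- If `F : E → E` is continuously differentiable on the closed ball `B` of
radius `r` around `θ*`, its derivative is uniformly negative definite there
(`⟪v, F'(θ) v⟫ ≤ -μ‖v‖²`), and `‖F(θ*)‖ < μ r / 2`, then `F` has exactly one zero `θ̂` in `B`,
and this zero satisfies `‖θ̂ - θ*‖ ≤ ‖F(θ*)‖ / μ`. -/
theorem stmt_0 {d : ℕ} (θstar : EuclideanSpace ℝ (Fin d)) (r : ℝ) (hr : 0 < r)
    (B : Set (EuclideanSpace ℝ (Fin d))) (hB : B = Metric.closedBall θstar r)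
    (F : EuclideanSpace ℝ (Fin d) → EuclideanSpace ℝ (Fin d))
    (F' : EuclideanSpace ℝ (Fin d) → EuclideanSpace ℝ (Fin d) →L[ℝ] EuclideanSpace ℝ (Fin d))
    (hderiv : ∀ θ ∈ B, HasFDerivWithinAt F (F' θ) B θ)
    (hcont : ContinuousOn F' B)
    (μ : ℝ) (hμ : 0 < μ)
    (hneg : ∀ θ ∈ B, ∀ v : EuclideanSpace ℝ (Fin d), ⟪v, F' θ v⟫ ≤ -μ * ‖v‖ ^ 2)
    (hsmall : ‖F θstar‖ < μ * r / 2) :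
    ∃ θhat : EuclideanSpace ℝ (Fin d),
      (θhat ∈ B ∧ F θhat = 0 ∧ ‖θhat - θstar‖ ≤ ‖F θstar‖ / μ) ∧
      ∀ θ' ∈ B, F θ' = 0 → θ' = θhat := by
  subst hB
  have hdiss := (convex_closedBall θstar r).stronglyDissipativeOn_of_hasFDerivWithinAt hderiv hneg
  obtain ⟨L, hL⟩ := (isCompact_closedBall θstar r).exists_lipschitzOnWith_of_hasFDerivWithinAt
    (convex_closedBall θstar r) hderiv hcont
  obtain ⟨θhat, hθhat, hzero⟩ := hdiss.exists_zero_mem_closedBall hμ hL hr.le hsmall.le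
  refine ⟨θhat, ⟨hθhat, hzero, ?_⟩, fun θ' hθ' hzero' =>
    hdiss.injOn hμ hθ' hθhat (hzero'.trans hzero.symm)⟩
  rw [le_div_iff₀' hμ]
  simpa [hzero] using hdiss.mul_norm_sub_le hθhat (mem_closedBall_self hr.le)
end

section
/- Let U, V : Ω → ℝ^d be random vectors on a probability space (Ω, 𝔉, P) with E‖U‖² ≤ C², E‖V‖² ≤ C², and E‖U − V‖² < ∞. Then the spectral norm of the difference of second-moment matrices satisfies ‖E[U Uᵀ] − E[V Vᵀ]‖₂ ≤ 2C √(E‖U − V‖²). -/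
/-! The operator of `E[UUᵀ] - E[VVᵀ]` sends `x` to `E[⟪U, x⟫ U - ⟪V, x⟫ V]`, and
`⟪U, x⟫ U - ⟪V, x⟫ V = ⟪U, x⟫ (U - V) + ⟪U - V, x⟫ V`. Hence its operator norm is at most
`E[‖U‖ ‖U - V‖] + E[‖V‖ ‖U - V‖]`, and Cauchy–Schwarz bounds each of these expectations by
`C √(E‖U - V‖²)`. -/

open MeasureTheory

/-- The spectral norm (ℓ²→ℓ² operator norm) of a real square matrix. -/
noncomputable def specNorm {d : ℕ} (M : Matrix (Fin d) (Fin d) ℝ) : ℝ :=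
  ‖(Matrix.toEuclideanCLM (𝕜 := ℝ) M :
      EuclideanSpace ℝ (Fin d) →L[ℝ] EuclideanSpace ℝ (Fin d))‖

open RealInnerProductSpace

section

variable {Ω : Type*} [MeasurableSpace Ω] {μ : Measure Ω}

lemma integral_norm_mul_norm_le_sqrt {E F : Type*} [NormedAddCommGroup E] [NormedAddCommGroup F]
    {f : Ω → E} {g : Ω → F} (hf : MemLp f 2 μ) (hg : MemLp g 2 μ) :
    ∫ ω, ‖f ω‖ * ‖g ω‖ ∂μ ≤ √(∫ ω, ‖f ω‖ ^ 2 ∂μ) * √(∫ ω, ‖g ω‖ ^ 2 ∂μ) := by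
  have h := integral_mul_le_Lp_mul_Lq_of_nonneg Real.HolderConjugate.two_two
    (ae_of_all μ fun ω => norm_nonneg (f ω)) (ae_of_all μ fun ω => norm_nonneg (g ω))
    (by simpa using hf.norm) (by simpa using hg.norm)
  simpa only [Real.rpow_two, Real.sqrt_eq_rpow] using h

section InnerProductSpace

variable {E : Type*} [NormedAddCommGroup E] [InnerProductSpace ℝ E]

lemma norm_inner_smul_sub_inner_smul_le (u v x : E) :
    ‖⟪u, x⟫ • u - ⟪v, x⟫ • v‖ ≤ (‖u‖ + ‖v‖) * ‖u - v‖ * ‖x‖ := by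
  have hsplit : ⟪u, x⟫ • u - ⟪v, x⟫ • v = ⟪u, x⟫ • (u - v) + ⟪u - v, x⟫ • v := by
    rw [inner_sub_left, smul_sub, sub_smul]; abel
  rw [hsplit]
  calc ‖⟪u, x⟫ • (u - v) + ⟪u - v, x⟫ • v‖
      ≤ |⟪u, x⟫| * ‖u - v‖ + |⟪u - v, x⟫| * ‖v‖ := by
        simpa only [norm_smul, Real.norm_eq_abs] using
          norm_add_le (⟪u, x⟫ • (u - v)) (⟪u - v, x⟫ • v)
    _ ≤ ‖u‖ * ‖x‖ * ‖u - v‖ + ‖u - v‖ * ‖x‖ * ‖v‖ := by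
        gcongr <;> exact abs_real_inner_le_norm _ _
    _ = (‖u‖ + ‖v‖) * ‖u - v‖ * ‖x‖ := by ring

lemma MeasureTheory.MemLp.integrable_inner_smul_self {W : Ω → E} (hW : MemLp W 2 μ) (x : E) :
    Integrable (fun ω => ⟪W ω, x⟫ • W ω) μ :=
  memLp_one_iff_integrable.1 (hW.smul (hW.inner_const (𝕜 := ℝ) x))

lemma norm_integral_inner_smul_sub_le {U V : Ω → E} (hU : MemLp U 2 μ) (hV : MemLp V 2 μ)
    (x : E) :
    ‖∫ ω, (⟪U ω, x⟫ • U ω - ⟪V ω, x⟫ • V ω) ∂μ‖ ≤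
      (√(∫ ω, ‖U ω‖ ^ 2 ∂μ) + √(∫ ω, ‖V ω‖ ^ 2 ∂μ)) * √(∫ ω, ‖U ω - V ω‖ ^ 2 ∂μ) * ‖x‖ := by
  have hUV : MemLp (fun ω => U ω - V ω) 2 μ := hU.sub hV
  have hUUV : Integrable (fun ω => ‖U ω‖ * ‖U ω - V ω‖) μ := hU.norm.integrable_mul hUV.norm
  have hVUV : Integrable (fun ω => ‖V ω‖ * ‖U ω - V ω‖) μ := hV.norm.integrable_mul hUV.norm
  calc ‖∫ ω, (⟪U ω, x⟫ • U ω - ⟪V ω, x⟫ • V ω) ∂μ‖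
      ≤ ∫ ω, ‖⟪U ω, x⟫ • U ω - ⟪V ω, x⟫ • V ω‖ ∂μ := norm_integral_le_integral_norm _
    _ ≤ ∫ ω, (‖U ω‖ * ‖U ω - V ω‖ + ‖V ω‖ * ‖U ω - V ω‖) * ‖x‖ ∂μ :=
        integral_mono_of_nonneg (ae_of_all _ fun ω => norm_nonneg _)
          ((hUUV.add hVUV).mul_const _) (ae_of_all _ fun ω => by
            simpa only [add_mul] using norm_inner_smul_sub_inner_smul_le (U ω) (V ω) x)
    _ = (∫ ω, ‖U ω‖ * ‖U ω - V ω‖ ∂μ + ∫ ω, ‖V ω‖ * ‖U ω - V ω‖ ∂μ) * ‖x‖ := by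
        rw [integral_mul_const, integral_add hUUV hVUV]
    _ ≤ (√(∫ ω, ‖U ω‖ ^ 2 ∂μ) + √(∫ ω, ‖V ω‖ ^ 2 ∂μ)) * √(∫ ω, ‖U ω - V ω‖ ^ 2 ∂μ) * ‖x‖ := by
        rw [add_mul _ _ √_]
        gcongr
        · exact integral_norm_mul_norm_le_sqrt hU hUV
        · exact integral_norm_mul_norm_le_sqrt hV hUV

end InnerProductSpace

section Matrix

variable {ι : Type*} [Fintype ι] [DecidableEq ι]

noncomputable def secondMomentMatrix (μ : Measure Ω) (W : Ω → EuclideanSpace ℝ ι) :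
    Matrix ι ι ℝ :=
  Matrix.of fun i j => ∫ ω, W ω i * W ω j ∂μ

lemma toEuclideanCLM_secondMomentMatrix_apply {W : Ω → EuclideanSpace ℝ ι} (hW : MemLp W 2 μ)
    (x : EuclideanSpace ℝ ι) :
    Matrix.toEuclideanCLM (𝕜 := ℝ) (secondMomentMatrix μ W) x = ∫ ω, ⟪W ω, x⟫ • W ω ∂μ := by
  ext i
  have hcoord : ∀ j, Integrable (fun ω => W ω i * W ω j) μ := fun j =>
    (hW.eval_piLp i).integrable_mul (hW.eval_piLp j)
  rw [eval_integral_piLp (hW.integrable_inner_smul_self x).eval_piLp]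
  simp only [Matrix.ofLp_toEuclideanCLM, Matrix.mulVec, dotProduct, secondMomentMatrix,
    Matrix.of_apply, PiLp.smul_apply, smul_eq_mul, PiLp.inner_apply, RCLike.inner_apply,
    conj_trivial, Finset.sum_mul]
  rw [integral_finsetSum _ fun j _ => ?_]
  · refine Finset.sum_congr rfl fun j _ => ?_
    rw [← integral_mul_const]
    exact integral_congr_ae (ae_of_all _ fun ω => by ring)
  · exact ((hcoord j).mul_const _).congr (ae_of_all _ fun ω => by ring)

end Matrix

end

theorem stmt_7_general {d : ℕ} {Ω : Type*} [MeasurableSpace Ω] (P : Measure Ω)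
    (U V : Ω → EuclideanSpace ℝ (Fin d))
    (hU : Measurable U) (hV : Measurable V)
    (C : ℝ) (hC : 0 ≤ C)
    (hU2 : Integrable (fun ω => ‖U ω‖ ^ 2) P)
    (hUC : ∫ ω, ‖U ω‖ ^ 2 ∂P ≤ C ^ 2)
    (hV2 : Integrable (fun ω => ‖V ω‖ ^ 2) P)
    (hVC : ∫ ω, ‖V ω‖ ^ 2 ∂P ≤ C ^ 2) :
    specNorm ((Matrix.of fun i j => ∫ ω, U ω i * U ω j ∂P) -
        (Matrix.of fun i j => ∫ ω, V ω i * V ω j ∂P)) ≤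
      2 * C * Real.sqrt (∫ ω, ‖U ω - V ω‖ ^ 2 ∂P) := by
  have hUL2 : MemLp U 2 P := (memLp_two_iff_integrable_sq_norm hU.aestronglyMeasurable).2 hU2
  have hVL2 : MemLp V 2 P := (memLp_two_iff_integrable_sq_norm hV.aestronglyMeasurable).2 hV2
  have hsqrtU : √(∫ ω, ‖U ω‖ ^ 2 ∂P) ≤ C := Real.sqrt_le_iff.2 ⟨hC, hUC⟩
  have hsqrtV : √(∫ ω, ‖V ω‖ ^ 2 ∂P) ≤ C := Real.sqrt_le_iff.2 ⟨hC, hVC⟩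
  change ‖Matrix.toEuclideanCLM (𝕜 := ℝ) (secondMomentMatrix P U - secondMomentMatrix P V)‖ ≤ _
  refine ContinuousLinearMap.opNorm_le_bound _ (by positivity) fun x => ?_
  rw [map_sub, sub_apply, toEuclideanCLM_secondMomentMatrix_apply hUL2,
    toEuclideanCLM_secondMomentMatrix_apply hVL2, ← integral_sub
    (hUL2.integrable_inner_smul_self x) (hVL2.integrable_inner_smul_self x)]
  calc ‖∫ ω, (⟪U ω, x⟫ • U ω - ⟪V ω, x⟫ • V ω) ∂P‖
      ≤ (√(∫ ω, ‖U ω‖ ^ 2 ∂P) + √(∫ ω, ‖V ω‖ ^ 2 ∂P)) * √(∫ ω, ‖U ω - V ω‖ ^ 2 ∂P) * ‖x‖ :=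
        norm_integral_inner_smul_sub_le hUL2 hVL2 x
    _ ≤ (C + C) * √(∫ ω, ‖U ω - V ω‖ ^ 2 ∂P) * ‖x‖ := by gcongr
    _ = _ := by ring

/-- For random vectors `U, V` with `E‖U‖² ≤ C²`, `E‖V‖² ≤ C²` and
`E‖U - V‖² < ∞`, the second-moment matrices satisfy
`‖E[U Uᵀ] - E[V Vᵀ]‖₂ ≤ 2C √(E‖U - V‖²)`. -/
theorem stmt_7 {d : ℕ} {Ω : Type*} [MeasurableSpace Ω] (P : Measure Ω) [IsProbabilityMeasure P]
    (U V : Ω → EuclideanSpace ℝ (Fin d))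
    (hU : Measurable U) (hV : Measurable V)
    (C : ℝ) (hC : 0 ≤ C)
    (hU2 : Integrable (fun ω => ‖U ω‖ ^ 2) P)
    (hUC : ∫ ω, ‖U ω‖ ^ 2 ∂P ≤ C ^ 2)
    (hV2 : Integrable (fun ω => ‖V ω‖ ^ 2) P)
    (hVC : ∫ ω, ‖V ω‖ ^ 2 ∂P ≤ C ^ 2)
    (hUV2 : Integrable (fun ω => ‖U ω - V ω‖ ^ 2) P) :
    specNorm ((Matrix.of fun i j => ∫ ω, U ω i * U ω j ∂P) -
        (Matrix.of fun i j => ∫ ω, V ω i * V ω j ∂P)) ≤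
      2 * C * Real.sqrt (∫ ω, ‖U ω - V ω‖ ^ 2 ∂P) :=
  stmt_7_general P U V hU hV C hC hU2 hUC hV2 hVC
end

section
/- Let θ̂ ∈ E, R > 0, and let B be the closed ball of radius R centered at θ̂. Let g : E → E be continuously differentiable on B with g(θ̂) = 0, and suppose that for every θ ∈ B the derivative g'(θ) is self-adjoint and satisfies −L‖v‖² ≤ ⟪v, g'(θ) v⟫ ≤ −m‖v‖² for all v ∈ E, with constants 0 < m ≤ L. Let H : E → E be a self-adjoint linear map with h_min‖v‖² ≤ ⟪v, H v⟫ ≤ h_max‖v‖² for all v (0 < h_min ≤ h_max), let α > 0, and define the iterates θ^(t+1) = θ^(t) + α·H·g(θ^(t)) with θ^(0) ∈ B; assume θ^(t) ∈ B for all t ≥ 0. Then for all t ≥ 0, ‖θ^(t) − θ̂‖ ≤ √(h_max/h_min) · ρ^t · ‖θ^(0) − θ̂‖, where ρ = max(|1 − α·m·h_min|, |1 − α·L·h_max|). -/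
/-!
Let `N = H⁻¹` and `q v = ⟪v, N v⟫`; the spectral bounds on `H` give `hmin q ≤ ‖·‖² ≤ hmax q`.
The step map `F θ = θ + α H g(θ)` fixes `θ̂` and has derivative `1 + α H g'(θ)`, and
`N (1 + α H g'(θ)) = N + α g'(θ)` is symmetric with quadratic form between `(1 - α L hmax) q` and
`(1 - α m hmin) q`, hence bounded by `ρ q` in absolute value. A Cauchy–Schwarz inequality for
forms dominated by `q`, combined with the mean value theorem for `⟪N u, F ·⟫` along the segment from
`θ̂` to `θ⁽ᵗ⁾`, gives `q (θ⁽ᵗ⁺¹⁾ - θ̂) ≤ ρ² q (θ⁽ᵗ⁾ - θ̂)`. Iterating and comparing `q` with `‖·‖²`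
yields the factor `√(hmax / hmin) ρᵗ`.
-/

open scoped RealInnerProductSpace

section

variable {E : Type*} [NormedAddCommGroup E] [InnerProductSpace ℝ E]

namespace LinearMap

theorem IsSymmetric.inner_map_sq_le_of_abs_inner_map_self_le {P : E →ₗ[ℝ] E} (hP : P.IsSymmetric)
    (N : E →ₗ[ℝ] E) {r : ℝ} (hPN : ∀ v, |⟪v, P v⟫| ≤ r * ⟪v, N v⟫) (u w : E) :
    ⟪u, P w⟫ ^ 2 ≤ r ^ 2 * (⟪u, N u⟫ * ⟪w, N w⟫) := by
  have hPwu : ⟪w, P u⟫ = ⟪u, P w⟫ := by rw [← hP, real_inner_comm]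
  -- The lower bound on `⟪v, P v⟫` at `v = u + t • w` and the upper one at `v = u - t • w` add up,
  -- by polarization, to this quadratic in `t`; its discriminant is therefore nonpositive.
  have hquad (t : ℝ) :
      0 ≤ 2 * r * ⟪w, N w⟫ * (t * t) + 4 * ⟪u, P w⟫ * t + 2 * r * ⟪u, N u⟫ := by
    have hplus := neg_le_of_abs_le (hPN (u + t • w))
    have hminus := le_of_abs_le (hPN (u - t • w))
    simp only [map_add, map_sub, map_smul, inner_add_left, inner_add_right, inner_sub_left,
      inner_sub_right, real_inner_smul_left, real_inner_smul_right, hPwu] at hplus hminus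
    linarith
  have hdisc := discrim_le_zero hquad
  rw [discrim] at hdisc
  linarith

theorem IsPositive.inner_map_sq_le {T : E →ₗ[ℝ] E} (hT : T.IsPositive) (u w : E) :
    ⟪u, T w⟫ ^ 2 ≤ ⟪u, T u⟫ * ⟪w, T w⟫ := by
  simpa using hT.isSymmetric.inner_map_sq_le_of_abs_inner_map_self_le T (r := 1)
    (fun v => (abs_of_nonneg (hT.inner_nonneg_right v)).trans_le (one_mul _).ge) u w

theorem IsPositive.sq_norm_map_le {T : E →ₗ[ℝ] E} (hT : T.IsPositive) {c : ℝ} (hc : 0 ≤ c)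
    (hTc : ∀ v, ⟪v, T v⟫ ≤ c * ‖v‖ ^ 2) (w : E) : ‖T w‖ ^ 2 ≤ c * ⟪w, T w⟫ := by
  have hcs := hT.inner_map_sq_le w (T w)
  rw [← hT.isSymmetric, real_inner_self_eq_norm_sq] at hcs
  have hb := hT.inner_nonneg_right w
  have hab : (‖T w‖ ^ 2) ^ 2 ≤ (c * ⟪w, T w⟫) * ‖T w‖ ^ 2 := by
    nlinarith [hTc (T w)]
  rcases (sq_nonneg ‖T w‖).eq_or_lt with h | h
  · rw [← h]; positivity
  · nlinarith

theorem mul_inner_map_self_le_sq_norm_map {T : E →ₗ[ℝ] E} {c : ℝ} (hc : 0 ≤ c)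
    (hTc : ∀ v, c * ‖v‖ ^ 2 ≤ ⟪v, T v⟫) (w : E) : c * ⟪w, T w⟫ ≤ ‖T w‖ ^ 2 := by
  have hcs := real_inner_le_norm w (T w)
  have hw2 := hTc w
  rcases (norm_nonneg w).eq_or_lt with hw | hw
  · simp [norm_eq_zero.mp hw.symm]
  · have : c * ‖w‖ ≤ ‖T w‖ := le_of_mul_le_mul_right (by nlinarith) hw
    nlinarith [norm_nonneg (T w)]

end LinearMap

theorem Convex.inner_map_sub_le_of_hasFDerivWithinAt {s : Set E} (hs : Convex ℝ s) {F : E → E}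
    {F' : E → E →L[ℝ] E} (hF : ∀ x ∈ s, HasFDerivWithinAt F (F' x) s x) {N : E →ₗ[ℝ] E}
    (hN : N.IsPositive) {ρ : ℝ} (hsymm : ∀ x ∈ s, (N ∘ₗ (F' x : E →ₗ[ℝ] E)).IsSymmetric)
    (hbound : ∀ x ∈ s, ∀ v, |⟪v, N (F' x v)⟫| ≤ ρ * ⟪v, N v⟫) {x y : E} (hx : x ∈ s)
    (hy : y ∈ s) :
    ⟪F y - F x, N (F y - F x)⟫ ≤ ρ ^ 2 * ⟪y - x, N (y - x)⟫ := by
  set u := F y - F x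
  obtain ⟨z, hz, hmvt⟩ := domain_mvt (f := fun θ => ⟪N u, F θ⟫)
    (fun θ hθ => (innerSL ℝ (N u)).hasFDerivAt.comp_hasFDerivWithinAt θ (hF θ hθ)) hs hx hy
  have hzs : z ∈ s := hs.segment_subset hx hy hz
  have hu : ⟪u, N u⟫ = ⟪u, N (F' z (y - x))⟫ := by
    simp only [ContinuousLinearMap.comp_apply, innerSL_apply_apply, ← inner_sub_right] at hmvt
    rw [← hN.isSymmetric, ← hN.isSymmetric]
    exact hmvt
  have hcs := (hsymm z hzs).inner_map_sq_le_of_abs_inner_map_self_le N (hbound z hzs) u (y - x)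
  rw [LinearMap.comp_apply, ContinuousLinearMap.coe_coe, ← hu] at hcs
  rcases (hN.inner_nonneg_right u).eq_or_lt with h | h
  · rw [← h]
    exact mul_nonneg (sq_nonneg ρ) (hN.inner_nonneg_right _)
  · nlinarith

theorem abs_add_mul_le_max_abs_mul {q n a α m L hmin hmax : ℝ} (hq : 0 ≤ q) (hα : 0 ≤ α)
    (hm : 0 ≤ m) (hL : 0 ≤ L) (hn_lo : hmin * q ≤ n) (hn_hi : n ≤ hmax * q)
    (ha_lo : -L * n ≤ a) (ha_hi : a ≤ -m * n) :
    |q + α * a| ≤ max |1 - α * m * hmin| |1 - α * L * hmax| * q := by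
  rw [abs_le]
  constructor
  · calc -(max |1 - α * m * hmin| |1 - α * L * hmax| * q)
        ≤ (1 - α * L * hmax) * q := by
          nlinarith [neg_abs_le (1 - α * L * hmax),
            le_max_right |1 - α * m * hmin| |1 - α * L * hmax|]
      _ ≤ q + α * a := by nlinarith [mul_nonneg hα hL]
  · calc q + α * a ≤ (1 - α * m * hmin) * q := by nlinarith [mul_nonneg hα hm]
      _ ≤ max |1 - α * m * hmin| |1 - α * L * hmax| * q := by
          nlinarith [le_abs_self (1 - α * m * hmin),
            le_max_left |1 - α * m * hmin| |1 - α * L * hmax|]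

theorem LinearMap.IsPositive.exists_isPositive_inverse [FiniteDimensional ℝ E] {T : E →ₗ[ℝ] E}
    (hT : T.IsPositive) {c : ℝ} (hc : 0 < c) (hTc : ∀ v, c * ‖v‖ ^ 2 ≤ ⟪v, T v⟫) :
    ∃ S : E →ₗ[ℝ] E, S.IsPositive ∧ (∀ v, T (S v) = v) ∧ ∀ v, S (T v) = v := by
  have hinj : Function.Injective T := by
    refine (injective_iff_map_eq_zero T).mpr fun v hv => ?_
    have := hTc v
    rw [hv, inner_zero_right] at this
    exact norm_eq_zero.mp (pow_eq_zero_iff two_ne_zero |>.mp (by nlinarith [sq_nonneg ‖v‖]))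
  set e := LinearEquiv.ofInjectiveEndo T hinj
  exact ⟨e.symm, LinearMap.IsPositive.toLinearMap_symm (T := e) hT,
    e.apply_symm_apply, e.symm_apply_apply⟩

def preconditionedStep (H : E →L[ℝ] E) (g : E → E) (α : ℝ) (θ : E) : E :=
  θ + α • H (g θ)

theorem Convex.inner_preconditionedStep_sub_le {s : Set E} (hs : Convex ℝ s) {g : E → E}
    {g' : E → E →L[ℝ] E} (hg : ∀ x ∈ s, HasFDerivWithinAt g (g' x) s x)
    (hg'symm : ∀ x ∈ s, (g' x : E →ₗ[ℝ] E).IsSymmetric) {m L : ℝ} (hm : 0 ≤ m) (hL : 0 ≤ L)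
    (hg'lo : ∀ x ∈ s, ∀ v, -L * ‖v‖ ^ 2 ≤ ⟪v, g' x v⟫)
    (hg'hi : ∀ x ∈ s, ∀ v, ⟪v, g' x v⟫ ≤ -m * ‖v‖ ^ 2) {H : E →L[ℝ] E} {N : E →ₗ[ℝ] E}
    (hN : N.IsPositive) (hNH : ∀ v, N (H v) = v) {hmin hmax : ℝ}
    (hNlo : ∀ v, hmin * ⟪v, N v⟫ ≤ ‖v‖ ^ 2) (hNhi : ∀ v, ‖v‖ ^ 2 ≤ hmax * ⟪v, N v⟫) {α : ℝ}
    (hα : 0 ≤ α) {x y : E} (hx : x ∈ s) (hy : y ∈ s) (hroot : g x = 0) :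
    ⟪preconditionedStep H g α y - x, N (preconditionedStep H g α y - x)⟫ ≤
      max |1 - α * m * hmin| |1 - α * L * hmax| ^ 2 * ⟪y - x, N (y - x)⟫ := by
  have hF (θ) (hθ : θ ∈ s) : HasFDerivWithinAt (preconditionedStep H g α)
      (ContinuousLinearMap.id ℝ E + α • H.comp (g' θ)) s θ :=
    (hasFDerivWithinAt_id θ s).add
      ((H.hasFDerivAt.comp_hasFDerivWithinAt θ (hg θ hθ)).const_smul α)
  have hNF (θ v) :
      N ((ContinuousLinearMap.id ℝ E + α • H.comp (g' θ)) v) = N v + α • g' θ v := by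
    simp [hNH]
  have hfix : preconditionedStep H g α x = x := by simp [preconditionedStep, hroot]
  have key := hs.inner_map_sub_le_of_hasFDerivWithinAt hF hN
    (ρ := max |1 - α * m * hmin| |1 - α * L * hmax|) (fun θ hθ u v => ?_) (fun θ hθ v => ?_)
    hx hy
  · rwa [hfix] at key
  · simp only [LinearMap.comp_apply, ContinuousLinearMap.coe_coe, hNF, inner_add_left,
      inner_add_right, real_inner_smul_left, real_inner_smul_right, hN.isSymmetric u v]
    rw [← ContinuousLinearMap.coe_coe, hg'symm θ hθ u v, ContinuousLinearMap.coe_coe]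
  · rw [hNF, inner_add_right, real_inner_smul_right]
    exact abs_add_mul_le_max_abs_mul (hN.inner_nonneg_right v) hα hm hL (hNlo v) (hNhi v)
      (hg'lo θ hθ v) (hg'hi θ hθ v)

theorem norm_le_sqrt_div_mul_pow_mul_of_inner_map_le {N : E →ₗ[ℝ] E} {hmin hmax ρ : ℝ}
    (hhmin : 0 < hmin) (hhmax : 0 ≤ hmax) (hρ : 0 ≤ ρ)
    (hNlo : ∀ v, hmin * ⟪v, N v⟫ ≤ ‖v‖ ^ 2) (hNhi : ∀ v, ‖v‖ ^ 2 ≤ hmax * ⟪v, N v⟫) {e : ℕ → E}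
    (he : ∀ t, ⟪e (t + 1), N (e (t + 1))⟫ ≤ ρ ^ 2 * ⟪e t, N (e t)⟫) (t : ℕ) :
    ‖e t‖ ≤ √(hmax / hmin) * ρ ^ t * ‖e 0‖ := by
  have hgeom := le_geom (u := fun t => ⟪e t, N (e t)⟫) (sq_nonneg ρ) t fun k _ => he k
  have hsq : ‖e t‖ ^ 2 ≤ (√(hmax / hmin) * ρ ^ t * ‖e 0‖) ^ 2 :=
    calc ‖e t‖ ^ 2 ≤ hmax * ((ρ ^ 2) ^ t * ⟪e 0, N (e 0)⟫) :=
          (hNhi _).trans (mul_le_mul_of_nonneg_left hgeom hhmax)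
      _ ≤ hmax * ((ρ ^ 2) ^ t * (‖e 0‖ ^ 2 / hmin)) := by
          gcongr
          rw [le_div_iff₀ hhmin]
          linarith [hNlo (e 0)]
      _ = (√(hmax / hmin) * ρ ^ t * ‖e 0‖) ^ 2 := by
          rw [mul_pow, mul_pow, Real.sq_sqrt (by positivity)]
          ring
  exact (pow_le_pow_iff_left₀ (norm_nonneg _) (by positivity) two_ne_zero).mp hsq

end

theorem stmt_12_general {d : ℕ} (θhat : EuclideanSpace ℝ (Fin d)) (R : ℝ)
    (B : Set (EuclideanSpace ℝ (Fin d))) (hB : B = Metric.closedBall θhat R)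
    (g : EuclideanSpace ℝ (Fin d) → EuclideanSpace ℝ (Fin d))
    (g' : EuclideanSpace ℝ (Fin d) → EuclideanSpace ℝ (Fin d) →L[ℝ] EuclideanSpace ℝ (Fin d))
    (hderiv : ∀ θ ∈ B, HasFDerivWithinAt g (g' θ) B θ)
    (hroot : g θhat = 0)
    (m L : ℝ) (hm : 0 < m) (hmL : m ≤ L)
    (hSA : ∀ θ ∈ B, ∀ u v : EuclideanSpace ℝ (Fin d), ⟪g' θ u, v⟫ = ⟪u, g' θ v⟫)
    (hlb : ∀ θ ∈ B, ∀ v : EuclideanSpace ℝ (Fin d), -L * ‖v‖ ^ 2 ≤ ⟪v, g' θ v⟫)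
    (hub : ∀ θ ∈ B, ∀ v : EuclideanSpace ℝ (Fin d), ⟪v, g' θ v⟫ ≤ -m * ‖v‖ ^ 2)
    (H : EuclideanSpace ℝ (Fin d) →L[ℝ] EuclideanSpace ℝ (Fin d))
    (hHSA : ∀ u v : EuclideanSpace ℝ (Fin d), ⟪H u, v⟫ = ⟪u, H v⟫)
    (hmin hmax : ℝ) (hhmin : 0 < hmin) (hhle : hmin ≤ hmax)
    (hHlb : ∀ v : EuclideanSpace ℝ (Fin d), hmin * ‖v‖ ^ 2 ≤ ⟪v, H v⟫)
    (hHub : ∀ v : EuclideanSpace ℝ (Fin d), ⟪v, H v⟫ ≤ hmax * ‖v‖ ^ 2)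
    (α : ℝ) (hα : 0 < α)
    (θseq : ℕ → EuclideanSpace ℝ (Fin d))
    (hrec : ∀ t : ℕ, θseq (t + 1) = θseq t + α • H (g (θseq t)))
    (hin : ∀ t : ℕ, θseq t ∈ B) :
    ∀ t : ℕ, ‖θseq t - θhat‖ ≤
      Real.sqrt (hmax / hmin) *
        (max |1 - α * m * hmin| |1 - α * L * hmax|) ^ t * ‖θseq 0 - θhat‖ := by
  have hHpos : (H : EuclideanSpace ℝ (Fin d) →ₗ[ℝ] EuclideanSpace ℝ (Fin d)).IsPositive :=
    ⟨hHSA, fun v => real_inner_comm v (H v) ▸ (by positivity : 0 ≤ hmin * ‖v‖ ^ 2).trans (hHlb v)⟩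
  obtain ⟨N, hN, hHN, hNH⟩ := hHpos.exists_isPositive_inverse hhmin hHlb
  have hNlo (v) : hmin * ⟪v, N v⟫ ≤ ‖v‖ ^ 2 := by
    simpa [hHN, real_inner_comm] using
      LinearMap.mul_inner_map_self_le_sq_norm_map hhmin.le hHlb (N v)
  have hNhi (v) : ‖v‖ ^ 2 ≤ hmax * ⟪v, N v⟫ := by
    simpa [hHN, real_inner_comm] using hHpos.sq_norm_map_le (hhmin.le.trans hhle) hHub (N v)
  subst hB
  have hθhat : θhat ∈ Metric.closedBall θhat R :=
    Metric.mem_closedBall_self (dist_nonneg.trans (hin 0))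
  refine norm_le_sqrt_div_mul_pow_mul_of_inner_map_le hhmin (hhmin.le.trans hhle)
    ((abs_nonneg _).trans (le_max_left _ _)) hNlo hNhi fun t => ?_
  rw [hrec t]
  exact (convex_closedBall θhat R).inner_preconditionedStep_sub_le hderiv hSA hm.le
    (hm.le.trans hmL) hlb hub hN hNH hNlo hNhi hα.le hθhat (hin t) hroot

/-- Theorem 5 of the paper: algorithmic convergence. Let `g` be continuously
differentiable on the closed ball `B` of radius `R` around its root `θ̂`, with self-adjoint
derivative satisfying `-L‖v‖² ≤ ⟪v, g'(θ) v⟫ ≤ -m‖v‖²` on `B` (`0 < m ≤ L`). Let `H` be a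
self-adjoint preconditioner with `h₁‖v‖² ≤ ⟪v, H v⟫ ≤ h₂‖v‖²` (`0 < h₁ ≤ h₂`) and `α > 0`.
Then the iterates `θ^(t+1) = θ^(t) + α H g(θ^(t))` staying in `B` satisfy
`‖θ^(t) - θ̂‖ ≤ √(h₂/h₁) ρᵗ ‖θ^(0) - θ̂‖` where `ρ = max(|1 - α m h₁|, |1 - α L h₂|)`. -/
theorem stmt_12 {d : ℕ} (θhat : EuclideanSpace ℝ (Fin d)) (R : ℝ) (hR : 0 < R)
    (B : Set (EuclideanSpace ℝ (Fin d))) (hB : B = Metric.closedBall θhat R)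
    (g : EuclideanSpace ℝ (Fin d) → EuclideanSpace ℝ (Fin d))
    (g' : EuclideanSpace ℝ (Fin d) → EuclideanSpace ℝ (Fin d) →L[ℝ] EuclideanSpace ℝ (Fin d))
    (hderiv : ∀ θ ∈ B, HasFDerivWithinAt g (g' θ) B θ)
    (hcont : ContinuousOn g' B)
    (hroot : g θhat = 0)
    (m L : ℝ) (hm : 0 < m) (hmL : m ≤ L)
    (hSA : ∀ θ ∈ B, ∀ u v : EuclideanSpace ℝ (Fin d), ⟪g' θ u, v⟫ = ⟪u, g' θ v⟫)
    (hlb : ∀ θ ∈ B, ∀ v : EuclideanSpace ℝ (Fin d), -L * ‖v‖ ^ 2 ≤ ⟪v, g' θ v⟫)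
    (hub : ∀ θ ∈ B, ∀ v : EuclideanSpace ℝ (Fin d), ⟪v, g' θ v⟫ ≤ -m * ‖v‖ ^ 2)
    (H : EuclideanSpace ℝ (Fin d) →L[ℝ] EuclideanSpace ℝ (Fin d))
    (hHSA : ∀ u v : EuclideanSpace ℝ (Fin d), ⟪H u, v⟫ = ⟪u, H v⟫)
    (hmin hmax : ℝ) (hhmin : 0 < hmin) (hhle : hmin ≤ hmax)
    (hHlb : ∀ v : EuclideanSpace ℝ (Fin d), hmin * ‖v‖ ^ 2 ≤ ⟪v, H v⟫)
    (hHub : ∀ v : EuclideanSpace ℝ (Fin d), ⟪v, H v⟫ ≤ hmax * ‖v‖ ^ 2)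
    (α : ℝ) (hα : 0 < α)
    (θseq : ℕ → EuclideanSpace ℝ (Fin d))
    (hrec : ∀ t : ℕ, θseq (t + 1) = θseq t + α • H (g (θseq t)))
    (hin : ∀ t : ℕ, θseq t ∈ B) :
    ∀ t : ℕ, ‖θseq t - θhat‖ ≤
      Real.sqrt (hmax / hmin) *
        (max |1 - α * m * hmin| |1 - α * L * hmax|) ^ t * ‖θseq 0 - θhat‖ :=
  stmt_12_general θhat R B hB g g' hderiv hroot m L hm hmL hSA hlb hub H hHSA hmin hmax hhmin hhle
    hHlb hHub α hα θseq hrec hin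
end

section
/- Assume: (boundary condition) for ν-almost every x ∈ 𝒳, p(θ)·q(θ, x)·s(θ, x) → 0 as θ → +∞ and as θ → −∞; (finite moments) the functions (θ, x) ↦ s(θ, x)²·p(θ)·q(θ, x), (θ, x) ↦ (∂_θ log q(θ, x))²·p(θ)·q(θ, x), and (θ, x) ↦ |∂_θ(p(θ)·s(θ, x))|·q(θ, x) are integrable with respect to the product of Lebesgue measure on ℝ and ν. Then ∫_ℝ ∫_𝒳 (s(θ, x) − ∂_θ log q(θ, x))²·p(θ)·q(θ, x) ν(dx) dθ = ∫_ℝ ∫_𝒳 [s(θ, x)² + 2·s(θ, x)·∂_θ log p(θ) + 2·∂_θ s(θ, x)]·p(θ)·q(θ, x) ν(dx) dθ + ∫_ℝ ∫_𝒳 (∂_θ log q(θ, x))²·p(θ)·q(θ, x) ν(dx) dθ. -/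
/-!
Expanding the square, the loss integrand is `s² p q - 2 p s ∂_θ q + (∂_θ log q)² p q`, while the
tractable integrand is `s² p q + 2 (p' s + p s') q`. The two differ by `-2 ∂_θ (p q s)`, whose
double integral vanishes: by Fubini integrate in `θ` first, where the boundary condition makes the
integral of the derivative zero. The cross term `p s ∂_θ q = s (∂_θ log q) p q` is integrable by
AM–GM from the first two moment conditions.
-/

open MeasureTheory Filter Topology

/-- `f'` is the pointwise limit of the measurable difference quotients
`(n + 1) • (f (θ + (n + 1)⁻¹) x - f θ x)`. -/
theorem measurable_uncurry_of_hasDerivAt {X E : Type*} [MeasurableSpace X] [NormedAddCommGroup E]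
    [NormedSpace ℝ E] [MeasurableSpace E] [BorelSpace E] [SecondCountableTopology E]
    {f f' : ℝ → X → E}
    (hf : Measurable (Function.uncurry f))
    (h : ∀ x θ, HasDerivAt (fun t => f t x) (f' θ x) θ) :
    Measurable (Function.uncurry f') := by
  have hstep : Tendsto (fun n : ℕ => ((n : ℝ) + 1)⁻¹) atTop (𝓝[≠] 0) :=
    tendsto_nhdsWithin_of_tendsto_nhds_of_eventually_within _
      (by simpa [one_div] using tendsto_one_div_add_atTop_nhds_zero_nat (𝕜 := ℝ))
      (Eventually.of_forall fun n => (inv_pos.2 n.cast_add_one_pos).ne')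
  have hlim : ∀ z : ℝ × X, Tendsto
      (fun n : ℕ => ((n : ℝ) + 1) • (f (z.1 + ((n : ℝ) + 1)⁻¹) z.2 - f z.1 z.2))
      atTop (𝓝 (f' z.1 z.2)) := fun z => by
    simpa [Function.comp_def, inv_inv] using (h z.2 z.1).tendsto_slope_zero.comp hstep
  refine measurable_of_tendsto_metrizable (fun n => ?_) (tendsto_pi_nhds.2 hlim)
  exact ((hf.comp ((measurable_fst.add_const _).prodMk measurable_snd)).sub hf).const_smul _

theorem integral_integral_eq_zero_of_hasDerivAt_of_tendsto {X E : Type*} [MeasurableSpace X]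
    {ν : Measure X} [SFinite ν] [NormedAddCommGroup E] [NormedSpace ℝ E] [CompleteSpace E]
    {F F' : ℝ → X → E} (hF : ∀ x θ, HasDerivAt (fun t => F t x) (F' θ x) θ)
    (hint : Integrable (Function.uncurry F') ((volume : Measure ℝ).prod ν))
    (hbot : ∀ᵐ x ∂ν, Tendsto (fun θ => F θ x) atBot (𝓝 0))
    (htop : ∀ᵐ x ∂ν, Tendsto (fun θ => F θ x) atTop (𝓝 0)) :
    ∫ θ, ∫ x, F' θ x ∂ν = 0 := by
  rw [integral_integral_swap hint]
  refine integral_eq_zero_of_ae ?_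
  filter_upwards [hbot, htop, hint.prod_left_ae] with x hxbot hxtop hxint
  simpa using integral_of_hasDerivAt_of_tendsto (hF x) hxint hxbot hxtop

theorem integrable_mul_mul_of_integrable_sq_mul {α : Type*} [MeasurableSpace α] {μ : Measure α}
    {f g w : α → ℝ} (hw : ∀ᵐ a ∂μ, 0 ≤ w a)
    (hm : AEStronglyMeasurable (fun a => f a * g a * w a) μ)
    (hf : Integrable (fun a => f a ^ 2 * w a) μ) (hg : Integrable (fun a => g a ^ 2 * w a) μ) :
    Integrable (fun a => f a * g a * w a) μ := by
  refine (hf.add hg).mono' hm (hw.mono fun a hwa => ?_)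
  have hfg : |f a * g a| ≤ f a ^ 2 + g a ^ 2 := by
    rw [abs_mul]
    nlinarith [sq_abs (f a), sq_abs (g a), sq_nonneg (|f a| - |g a|)]
  calc ‖f a * g a * w a‖ = |f a * g a| * w a := by
        rw [Real.norm_eq_abs, abs_mul, abs_of_nonneg hwa]
    _ ≤ (f a ^ 2 + g a ^ 2) * w a := mul_le_mul_of_nonneg_right hfg hwa
    _ = f a ^ 2 * w a + g a ^ 2 * w a := add_mul _ _ _

theorem score_matching_loss_integrand_eq {p p' q q' s s' : ℝ} (hp : p ≠ 0) (hq : q ≠ 0) :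
    (s - q' / q) ^ 2 * p * q = (s ^ 2 + 2 * s * (p' / p) + 2 * s') * p * q
      + (q' / q) ^ 2 * p * q - 2 * ((p' * q + p * q') * s + p * q * s') := by
  field_simp
  ring

theorem score_matching_objective_integrand_eq {p p' q s s' : ℝ} (hp : p ≠ 0) :
    (s ^ 2 + 2 * s * (p' / p) + 2 * s') * p * q = s ^ 2 * p * q + 2 * ((p' * s + p * s') * q) := by
  field_simp
  ring

theorem integrable_mul_mul_of_score_moments {X : Type*} [MeasurableSpace X]
    {μ : Measure (ℝ × X)} {p : ℝ → ℝ} {q q' s : ℝ → X → ℝ}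
    (hppos : ∀ θ, 0 < p θ) (hqpos : ∀ θ x, 0 < q θ x)
    (hpm : Measurable p) (hqm : Measurable (Function.uncurry q))
    (hq'm : Measurable (Function.uncurry q')) (hsm : Measurable (Function.uncurry s))
    (hmom1 : Integrable (fun z : ℝ × X => s z.1 z.2 ^ 2 * p z.1 * q z.1 z.2) μ)
    (hmom2 : Integrable (fun z : ℝ × X => (q' z.1 z.2 / q z.1 z.2) ^ 2 * p z.1 * q z.1 z.2) μ) :
    Integrable (fun z : ℝ × X => p z.1 * q' z.1 z.2 * s z.1 z.2) μ := by
  refine (integrable_mul_mul_of_integrable_sq_mul (f := fun z => s z.1 z.2)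
    (g := fun z => q' z.1 z.2 / q z.1 z.2) (w := fun z => p z.1 * q z.1 z.2)
    (Eventually.of_forall fun z => (mul_pos (hppos _) (hqpos _ _)).le)
    ((hsm.mul (hq'm.div hqm)).mul ((hpm.comp measurable_fst).mul hqm)).aestronglyMeasurable
    (by simpa only [mul_assoc] using hmom1) (by simpa only [mul_assoc] using hmom2)).congr
    (Eventually.of_forall fun z => ?_)
  have := (hqpos z.1 z.2).ne'
  field_simp

theorem stmt_16_general {X : Type*} [MeasurableSpace X] (ν : Measure X) [SigmaFinite ν]
    (p p' : ℝ → ℝ) (q q' s s' : ℝ → X → ℝ)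
    -- `p` is a continuously differentiable, everywhere positive probability density on ℝ
    (hp : ∀ θ : ℝ, HasDerivAt p (p' θ) θ)
    (hppos : ∀ θ : ℝ, 0 < p θ)
    -- `q` is the model density: jointly measurable, positive, C¹ in `θ`, density in `x`
    (hqmeas : Measurable (Function.uncurry q))
    (hqpos : ∀ θ x, 0 < q θ x)
    (hq : ∀ x, ∀ θ : ℝ, HasDerivAt (fun t => q t x) (q' θ x) θ)
    -- the score model `s`: jointly measurable, C¹ in `θ`
    (hsmeas : Measurable (Function.uncurry s))
    (hs : ∀ x, ∀ θ : ℝ, HasDerivAt (fun t => s t x) (s' θ x) θ)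
    -- boundary condition
    (hbdry : ∀ᵐ x ∂ν,
      Tendsto (fun θ => p θ * q θ x * s θ x) atTop (𝓝 0) ∧
      Tendsto (fun θ => p θ * q θ x * s θ x) atBot (𝓝 0))
    -- finite moments
    (hmom1 : Integrable (fun z : ℝ × X => s z.1 z.2 ^ 2 * p z.1 * q z.1 z.2)
      ((volume : Measure ℝ).prod ν))
    (hmom2 : Integrable (fun z : ℝ × X => (q' z.1 z.2 / q z.1 z.2) ^ 2 * p z.1 * q z.1 z.2)
      ((volume : Measure ℝ).prod ν))
    (hmom3 : Integrable (fun z : ℝ × X => |p' z.1 * s z.1 z.2 + p z.1 * s' z.1 z.2| * q z.1 z.2)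
      ((volume : Measure ℝ).prod ν)) :
    ∫ θ : ℝ, ∫ x, (s θ x - q' θ x / q θ x) ^ 2 * p θ * q θ x ∂ν =
      (∫ θ : ℝ, ∫ x, (s θ x ^ 2 + 2 * s θ x * (p' θ / p θ) + 2 * s' θ x) * p θ * q θ x ∂ν) +
      ∫ θ : ℝ, ∫ x, (q' θ x / q θ x) ^ 2 * p θ * q θ x ∂ν := by
  have hpm : Measurable p := (continuous_iff_continuousAt.2 fun θ => (hp θ).continuousAt).measurable
  have hp'm : Measurable p' := (funext fun θ => (hp θ).deriv : deriv p = p') ▸ measurable_deriv p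
  have hq'm := measurable_uncurry_of_hasDerivAt hqmeas hq
  have hs'm := measurable_uncurry_of_hasDerivAt hsmeas hs
  have hC := integrable_mul_mul_of_score_moments hppos hqpos hpm hqmeas hq'm hsmeas hmom1 hmom2
  have hD : Integrable (fun z : ℝ × X => (p' z.1 * s z.1 z.2 + p z.1 * s' z.1 z.2) * q z.1 z.2)
      ((volume : Measure ℝ).prod ν) :=
    hmom3.mono' (by fun_prop) <| Eventually.of_forall fun z => by
      rw [Real.norm_eq_abs, abs_mul, abs_of_pos (hqpos _ _)]
  have hG : Integrable (fun z : ℝ × X => (p' z.1 * q z.1 z.2 + p z.1 * q' z.1 z.2) * s z.1 z.2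
      + p z.1 * q z.1 z.2 * s' z.1 z.2) ((volume : Measure ℝ).prod ν) :=
    (hC.add hD).congr (Eventually.of_forall fun z => by simp only [Pi.add_apply]; ring)
  have hparts : ∫ θ, ∫ x, ((p' θ * q θ x + p θ * q' θ x) * s θ x + p θ * q θ x * s' θ x) ∂ν = 0 :=
    integral_integral_eq_zero_of_hasDerivAt_of_tendsto
      (F := fun θ x => p θ * q θ x * s θ x) (fun x θ => ((hp θ).mul (hq x θ)).mul (hs x θ)) hG
      (hbdry.mono fun _ h => h.2) (hbdry.mono fun _ h => h.1)
  have hR : Integrable (fun z : ℝ × X => (s z.1 z.2 ^ 2 + 2 * s z.1 z.2 * (p' z.1 / p z.1)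
      + 2 * s' z.1 z.2) * p z.1 * q z.1 z.2) ((volume : Measure ℝ).prod ν) :=
    (hmom1.add (hD.const_mul 2)).congr <| Eventually.of_forall fun z =>
      (score_matching_objective_integrand_eq (hppos z.1).ne').symm
  have hsplit := integral_integral_sub (hR.add hmom2) (hG.const_mul 2)
  simp only [Pi.add_apply, integral_const_mul, hparts] at hsplit
  simp only [fun θ x => score_matching_loss_integrand_eq (p' := p' θ) (s' := s' θ x)
    (hppos θ).ne' (hqpos θ x).ne', hsplit, integral_integral_add hR hmom2]
  ring

/-- score-matching objective equivalence, one-dimensional parameter.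
Under the boundary condition `p(θ) q(θ,x) s(θ,x) → 0` as `θ → ±∞` (for `ν`-a.e. `x`) and the
finite-moment conditions, the intractable score-matching loss equals the tractable objective
plus a constant not depending on `s`:
`∫∫ (s - ∂_θ log q)² p q = ∫∫ (s² + 2 s ∂_θ log p + 2 ∂_θ s) p q + ∫∫ (∂_θ log q)² p q`. -/
theorem stmt_16 {X : Type*} [MeasurableSpace X] (ν : Measure X) [SigmaFinite ν]
    (p p' : ℝ → ℝ) (q q' s s' : ℝ → X → ℝ)
    -- `p` is a continuously differentiable, everywhere positive probability density on ℝ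
    (hp : ∀ θ : ℝ, HasDerivAt p (p' θ) θ)
    (hp'cont : Continuous p')
    (hppos : ∀ θ : ℝ, 0 < p θ)
    (hpint : ∫ θ : ℝ, p θ = 1)
    -- `q` is the model density: jointly measurable, positive, C¹ in `θ`, density in `x`
    (hqmeas : Measurable (Function.uncurry q))
    (hqpos : ∀ θ x, 0 < q θ x)
    (hq : ∀ x, ∀ θ : ℝ, HasDerivAt (fun t => q t x) (q' θ x) θ)
    (hq'cont : ∀ x, Continuous (fun θ => q' θ x))
    (hqint : ∀ θ : ℝ, ∫ x, q θ x ∂ν = 1)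
    -- the score model `s`: jointly measurable, C¹ in `θ`
    (hsmeas : Measurable (Function.uncurry s))
    (hs : ∀ x, ∀ θ : ℝ, HasDerivAt (fun t => s t x) (s' θ x) θ)
    (hs'cont : ∀ x, Continuous (fun θ => s' θ x))
    -- boundary condition
    (hbdry : ∀ᵐ x ∂ν,
      Tendsto (fun θ => p θ * q θ x * s θ x) atTop (𝓝 0) ∧
      Tendsto (fun θ => p θ * q θ x * s θ x) atBot (𝓝 0))
    -- finite moments
    (hmom1 : Integrable (fun z : ℝ × X => s z.1 z.2 ^ 2 * p z.1 * q z.1 z.2)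
      ((volume : Measure ℝ).prod ν))
    (hmom2 : Integrable (fun z : ℝ × X => (q' z.1 z.2 / q z.1 z.2) ^ 2 * p z.1 * q z.1 z.2)
      ((volume : Measure ℝ).prod ν))
    (hmom3 : Integrable (fun z : ℝ × X => |p' z.1 * s z.1 z.2 + p z.1 * s' z.1 z.2| * q z.1 z.2)
      ((volume : Measure ℝ).prod ν)) :
    ∫ θ : ℝ, ∫ x, (s θ x - q' θ x / q θ x) ^ 2 * p θ * q θ x ∂ν =
      (∫ θ : ℝ, ∫ x, (s θ x ^ 2 + 2 * s θ x * (p' θ / p θ) + 2 * s' θ x) * p θ * q θ x ∂ν) +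
      ∫ θ : ℝ, ∫ x, (q' θ x / q θ x) ^ 2 * p θ * q θ x ∂ν :=
  stmt_16_general ν p p' q q' s s' hp hppos hqmeas hqpos hq hsmeas hs hbdry hmom1 hmom2 hmom3
end
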